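/- Let F be a field of characteristic not 2, let a, b ∈ F^×, let ρ ∈ F_a^× and μ ∈ F_b^× satisfy N_{F_a/F}(ρ) = N_{F_b/F}(μ), and set d := Tr_{F_a/F}(ρ) + Tr_{F_b/F}(μ). If d ≠ 0, then (μ, a) = (d, a) in Br(F_b). -/

import Mathlib

open Polynomial Quaternion TensorProduct

/-- The quadratic étale algebra `F_a = F[x]/(x² - a)`. -/
noncomputable abbrev quadAlg (F : Type) [Field F] (a : F) : Type :=
  AdjoinRoot (X ^ 2 - C a)

/-- The étale algebra `F_{a,d} = (F_a)_d`. -/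
noncomputable abbrev quadAlg2 (F : Type) [Field F] (a d : F) : Type :=
  AdjoinRoot (X ^ 2 - C (algebraMap F (quadAlg F a) d))

/-- The class of the quaternion algebra `(α, β)` is trivial in the Brauer group of `K`. -/
def QSplit (K : Type) [CommRing K] (α β : K) : Prop :=
  Nonempty (ℍ[K, α, β] ≃ₐ[K] Matrix (Fin 2) (Fin 2) K)

/-- The canonical map `F_d → F_{a,d}`. -/
noncomputable def toQ2 (F : Type) [Field F] (a d : F) :
    quadAlg F d →ₐ[F] quadAlg2 F a d :=
  AdjoinRoot.liftAlgHom _ (Algebra.ofId F _) (AdjoinRoot.root _) (by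
    refine (show aeval (AdjoinRoot.root _ : quadAlg2 F a d) (X ^ 2 - C d : F[X]) = 0 from ?_)
    have h := AdjoinRoot.eval₂_root (X ^ 2 - C ((algebraMap F (quadAlg F a)) d))
    simp only [eval₂_sub, eval₂_pow, eval₂_X, eval₂_C] at h
    simp only [map_sub, map_pow, aeval_X, aeval_C]
    rw [IsScalarTower.algebraMap_apply F (quadAlg F a) (quadAlg2 F a d)]
    exact h)

section QuatIso

set_option linter.unnecessarySeqFocus false

variable {K : Type} [CommRing K]

attribute [local simp] QuaternionAlgebra.re_mul QuaternionAlgebra.imI_mul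
  QuaternionAlgebra.imJ_mul QuaternionAlgebra.imK_mul

/-- Quaternionic basis of constants `(μ, A)` inside `ℍ[K, D, A]`. -/
noncomputable def fwdBasis (μ A D S T e : K) (he : D * e = 1)
    (hmain : μ * D = S^2 - A*T^2) :
    QuaternionAlgebra.Basis ℍ[K, D, A] μ 0 A where
  i := ⟨0, e*S, 0, -(e*T)⟩
  j := ⟨0, 0, 1, 0⟩
  k := ⟨0, -(e*(A*T)), 0, e*S⟩
  i_mul_i := by
    ext <;> simp <;> first
      | ring1
      | linear_combination (-(D*e^2))*hmain + (μ*(D*e+1))*he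
  j_mul_j := by ext <;> simp
  i_mul_j := by ext <;> simp <;> ring
  j_mul_i := by ext <;> simp <;> ring

/-- Quaternionic basis of constants `(D, A)` inside `ℍ[K, μ, A]`. -/
noncomputable def bwdBasis (μ A D S T m : K) (hm : μ * m = 1)
    (hmain : μ * D = S^2 - A*T^2) :
    QuaternionAlgebra.Basis ℍ[K, μ, A] D 0 A where
  i := ⟨0, m*S, 0, m*T⟩
  j := ⟨0, 0, 1, 0⟩
  k := ⟨0, m*(A*T), 0, m*S⟩
  i_mul_i := by
    ext <;> simp <;> first
      | ring1
      | linear_combination (-(μ*m^2))*hmain + (D*(μ*m+1))*hm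
  j_mul_j := by ext <;> simp
  i_mul_j := by ext <;> simp <;> ring
  j_mul_i := by ext <;> simp <;> ring

/-- If `μ D = S² - A T²` with `μ, D` invertible, then `(μ, A) ≅ (D, A)`. -/
noncomputable def quatIso (μ A D S T m e : K) (hm : μ * m = 1) (he : D * e = 1)
    (hmain : μ * D = S^2 - A*T^2) :
    ℍ[K, μ, A] ≃ₐ[K] ℍ[K, D, A] :=
  AlgEquiv.ofAlgHom
    ((fwdBasis μ A D S T e he hmain).liftHom)
    ((bwdBasis μ A D S T m hm hmain).liftHom)
    (by
      apply QuaternionAlgebra.hom_ext <;>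
        simp [QuaternionAlgebra.Basis.lift, fwdBasis, bwdBasis,
          QuaternionAlgebra.Basis.self]
      refine ⟨?_, by ring⟩
      linear_combination (-(m*e))*hmain + hm + (μ*m)*he)
    (by
      apply QuaternionAlgebra.hom_ext <;>
        simp [QuaternionAlgebra.Basis.lift, fwdBasis, bwdBasis,
          QuaternionAlgebra.Basis.self]
      refine ⟨?_, by ring⟩
      linear_combination (-(m*e))*hmain + he + (D*e)*hm)

end QuatIso

/-- Every element of `F[x]/(x²-c)` is `p + q·x`, with trace `2p` and norm `p² - c q²`. -/
lemma quad_repr (F : Type) [Field F] (c : F) (ρ : quadAlg F c) :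
    ∃ p q : F, ρ = algebraMap F (quadAlg F c) p
        + algebraMap F (quadAlg F c) q * AdjoinRoot.root (X ^ 2 - C c) ∧
      Algebra.trace F (quadAlg F c) ρ = 2*p ∧ Algebra.norm F ρ = p^2 - c*q^2 := by
  set g : F[X] := X ^ 2 - C c with hgdef
  have hg : g.Monic := monic_X_pow_sub_C c two_ne_zero
  have hdeg2 : g.degree = 2 := degree_X_pow_sub_C (by norm_num) c
  have hdeg : g.natDegree = 2 := natDegree_X_pow_sub_C
  set r : F[X] := AdjoinRoot.modByMonicHom hg ρ with hrdef
  have hmk : AdjoinRoot.mk g r = ρ := AdjoinRoot.mk_leftInverse hg ρ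
  have hrlt : r.degree < 2 := by
    obtain ⟨P, hP⟩ := AdjoinRoot.mk_surjective ρ
    rw [hrdef, ← hP, AdjoinRoot.modByMonicHom_mk, ← hdeg2]
    exact degree_modByMonic_lt P hg
  have hrle : r.degree ≤ 1 := by
    rcases hdd : r.degree with _ | k
    · exact bot_le
    · rw [hdd, WithBot.some_eq_coe] at hrlt
      have h2 : ((2:ℕ) : WithBot ℕ) = (2 : WithBot ℕ) := by norm_cast
      rw [← h2] at hrlt
      have h1 : k < 2 := WithBot.coe_lt_coe.mp hrlt
      show (k : WithBot ℕ) ≤ ((1:ℕ) : WithBot ℕ)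
      exact_mod_cast (by omega : k ≤ 1)
  set p := r.coeff 0 with hp
  set q := r.coeff 1 with hq
  have hr : r = C q * X + C p := eq_X_add_C_of_degree_le_one hrle
  set B := (AdjoinRoot.powerBasisAux' hg).reindex (finCongr hdeg) with hB
  have hBval : ∀ j : Fin 2, B j = AdjoinRoot.root g ^ (j:ℕ) := by
    intro j
    rw [hB, Module.Basis.reindex_apply]
    exact (AdjoinRoot.powerBasis' hg).basis_eq_pow _
  have hBrepr : ∀ (x : AdjoinRoot g) (i : Fin 2),
      B.repr x i = (AdjoinRoot.modByMonicHom hg x).coeff (i:ℕ) := by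
    intro x i
    rw [hB, Module.Basis.repr_reindex_apply]
    exact AdjoinRoot.powerBasisAux'_repr_apply_to_fun hg x _
  have hM : ∀ i j : Fin 2, Algebra.leftMulMatrix B ρ i j
      = (AdjoinRoot.modByMonicHom hg (ρ * AdjoinRoot.root g ^ (j:ℕ))).coeff (i:ℕ) := by
    intro i j
    rw [Algebra.leftMulMatrix_eq_repr_mul, hBval j, hBrepr]
  have hmod0 : AdjoinRoot.modByMonicHom hg (ρ * AdjoinRoot.root g ^ (0:ℕ)) = r := by
    rw [pow_zero, mul_one]
  have h12 : (1 : WithBot ℕ) < 2 := by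
    have : ((1:ℕ) : WithBot ℕ) < ((2:ℕ) : WithBot ℕ) := WithBot.coe_lt_coe.mpr one_lt_two
    simpa using this
  have hmod1 : AdjoinRoot.modByMonicHom hg (ρ * AdjoinRoot.root g ^ (1:ℕ))
      = C p * X + C (q * c) := by
    have hmul : ρ * AdjoinRoot.root g ^ (1:ℕ) = AdjoinRoot.mk g (r * X) := by
      rw [pow_one, ← hmk, ← AdjoinRoot.mk_X (f := g), ← map_mul]
    rw [hmul, AdjoinRoot.modByMonicHom_mk]
    have hu := div_modByMonic_unique (f := r * X) (C q)
      (C p * X + C (q * c)) hg ⟨by rw [hgdef, C_mul, hr]; ring , ?_⟩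
    · exact hu.2
    · rw [hdeg2]
      exact lt_of_le_of_lt (degree_linear_le) h12
  refine ⟨p, q, ?_, ?_, ?_⟩
  · rw [← hmk, hr, map_add, map_mul, AdjoinRoot.mk_C, AdjoinRoot.mk_C, AdjoinRoot.mk_X,
      AdjoinRoot.algebraMap_eq]
    ring
  · rw [Algebra.trace_eq_matrix_trace B ρ, Matrix.trace_fin_two, hM, hM]
    simp only [Fin.val_zero, Fin.val_one]
    rw [hmod0, hmod1]
    simp [coeff_add, coeff_C, coeff_C_mul]
    ring
  · rw [Algebra.norm_eq_matrix_det B ρ, Matrix.det_fin_two, hM, hM, hM, hM]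
    simp only [Fin.val_zero, Fin.val_one]
    rw [hmod0, hmod1]
    simp [coeff_add, coeff_C, coeff_C_mul]
    ring

/-- If `ρ ∈ F_a^×`, `μ ∈ F_b^×` have the same norm, and
`d = Tr_{F_a/F}(ρ) + Tr_{F_b/F}(μ) ≠ 0`, then `(μ, a) = (d, a)` in `Br(F_b)`. -/
theorem stmt3 (F : Type) [Field F] (hchar : (2 : F) ≠ 0) (a b : F) (ha : a ≠ 0) (hb : b ≠ 0)
    (ρ : quadAlg F a) (μ : quadAlg F b) (hρ : IsUnit ρ) (hμ : IsUnit μ)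
    (hN : Algebra.norm F ρ = Algebra.norm F μ)
    (d : F) (hd : d = Algebra.trace F (quadAlg F a) ρ + Algebra.trace F (quadAlg F b) μ)
    (hd0 : d ≠ 0) :
    Nonempty (ℍ[quadAlg F b, μ, algebraMap F (quadAlg F b) a] ≃ₐ[quadAlg F b]
      ℍ[quadAlg F b, algebraMap F (quadAlg F b) d, algebraMap F (quadAlg F b) a]) := by
  obtain ⟨p, q, hρrep, hρtr, hρnm⟩ := quad_repr F a ρ
  obtain ⟨p', q', hμrep, hμtr, hμnm⟩ := quad_repr F b μ
  rw [hρtr, hμtr] at hd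
  rw [hρnm, hμnm] at hN
  have hrb : AdjoinRoot.root (X ^ 2 - C b) ^ 2 = algebraMap F (quadAlg F b) b := by
    have h0 : (AdjoinRoot.mk (X ^ 2 - C b)) (X ^ 2 - C b) = 0 := AdjoinRoot.mk_self
    rw [map_sub, map_pow, AdjoinRoot.mk_X, AdjoinRoot.mk_C, sub_eq_zero] at h0
    rw [AdjoinRoot.algebraMap_eq]
    exact h0
  have hNK : algebraMap F (quadAlg F b) p ^ 2
        - algebraMap F (quadAlg F b) a * algebraMap F (quadAlg F b) q ^ 2
      = algebraMap F (quadAlg F b) p' ^ 2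
        - algebraMap F (quadAlg F b) b * algebraMap F (quadAlg F b) q' ^ 2 := by
    have h := congrArg (algebraMap F (quadAlg F b)) hN
    simpa only [map_sub, map_mul, map_pow] using h
  have hm : μ * (↑hμ.unit⁻¹ : quadAlg F b) = 1 := by
    exact hμ.mul_val_inv
  have he : algebraMap F (quadAlg F b) d * algebraMap F (quadAlg F b) d⁻¹ = 1 := by
    rw [← map_mul, mul_inv_cancel₀ hd0, map_one]
  have hmain : μ * algebraMap F (quadAlg F b) d
      = (μ + algebraMap F (quadAlg F b) p) ^ 2
        - algebraMap F (quadAlg F b) a * (algebraMap F (quadAlg F b) q) ^ 2 := by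
    rw [hd, hμrep]
    simp only [map_add, map_mul, map_ofNat]
    linear_combination (-(algebraMap F (quadAlg F b) q') ^ 2) * hrb - hNK
  exact ⟨quatIso μ _ _ _ _ _ _ hm he hmain⟩
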